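/- Let a ∈ ℝ \ {0,1} and η₁,…,η₇, ξ₁,…,ξ₇ ∈ ℝ. Define R(t) = η₁(t−1)²(t−a)² + η₂t²(t−a)² + η₃t²(t−1)² + η₄t²(t−1)²(t−a)² + η₅t(t−1)²(t−a)² + η₆t²(t−1)(t−a) + η₇t(t−1)(t−a), S(t) = ξ₁(t−1)²(t−a)² + ξ₂t²(t−a)² + ξ₃t²(t−1)² + ξ₄t²(t−1)²(t−a)² + ξ₅t(t−1)²(t−a)² + ξ₆t²(t−1)(t−a) + ξ₇t(t−1)(t−a), and G(t) = 3t² − 2(a+1)t + a. Let y be three times differentiable on an open interval I ⊆ ℝ with y'(x) ≠ 0, y(x) ∉ {0,1,a}, R(y(x)) ≠ 0, and (y'(x))² = 4·y(x)²·(y(x)−1)²·(y(x)−a)²/R(y(x)) for all x ∈ I. Then for every x ∈ I (writing y = y(x)): −S(y)/R(y) − (1/2)·{y,x}(x) = (y²(y−1)²(y−a)²/R(y)²)·[ R''(y) + (G(y)·R'(y) − 2·R(y)·G'(y))/(y(y−1)(y−a)) + R(y)·G(y)²/(y²(y−1)²(y−a)²) − (5/4)·R'(y)²/R(y) ] − S(y)/R(y).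 -/

import Mathlib

/-- The polynomial `R` of the generalized-Heun-class Bose invariant. -/
def gheunR (a η₁ η₂ η₃ η₄ η₅ η₆ η₇ : ℝ) : ℝ → ℝ := fun t =>
  η₁ * (t - 1) ^ 2 * (t - a) ^ 2 + η₂ * t ^ 2 * (t - a) ^ 2 + η₃ * t ^ 2 * (t - 1) ^ 2
    + η₄ * t ^ 2 * (t - 1) ^ 2 * (t - a) ^ 2 + η₅ * t * (t - 1) ^ 2 * (t - a) ^ 2
    + η₆ * t ^ 2 * (t - 1) * (t - a) + η₇ * t * (t - 1) * (t - a)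

/-- The polynomial `S` of the generalized-Heun-class Bose invariant. -/
def gheunS (a ξ₁ ξ₂ ξ₃ ξ₄ ξ₅ ξ₆ ξ₇ : ℝ) : ℝ → ℝ := fun t =>
  ξ₁ * (t - 1) ^ 2 * (t - a) ^ 2 + ξ₂ * t ^ 2 * (t - a) ^ 2 + ξ₃ * t ^ 2 * (t - 1) ^ 2
    + ξ₄ * t ^ 2 * (t - 1) ^ 2 * (t - a) ^ 2 + ξ₅ * t * (t - 1) ^ 2 * (t - a) ^ 2
    + ξ₆ * t ^ 2 * (t - 1) * (t - a) + ξ₇ * t * (t - 1) * (t - a)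

/-- `G(t) = 3t² − 2(a+1)t + a`. -/
def gheunG (a : ℝ) : ℝ → ℝ := fun t => 3 * t ^ 2 - 2 * (a + 1) * t + a

/-!
If `y'² = F(y)` with `y' ≠ 0`, differentiating gives `2y'' = F'(y)`, so `y''/y' = F'(y)/(2y')`;
differentiating once more and eliminating `y'²` shows that the Schwarzian depends on `y` alone:
`{y,x} = F''(y)/2 - 3F'(y)²/(8F(y))`. The theorem is this formula for `F = 4p²/R` with
`p(t) = t(t-1)(t-a)`, whose derivative is `G`, written out in terms of `R, R', R'', G, G'`.
-/

open Filter Topology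

noncomputable def schwarzian (y : ℝ → ℝ) (x : ℝ) : ℝ :=
  deriv (fun t => deriv (deriv y) t / deriv y t) x - 1 / 2 * (deriv (deriv y) x / deriv y x) ^ 2

section SqDerivEq

variable {y F F' : ℝ → ℝ} {I : Set ℝ}

theorem two_mul_deriv_deriv_eq_of_sq_deriv_eq (hI : IsOpen I)
    (hy : ∀ x ∈ I, DifferentiableAt ℝ y x) (hy' : ∀ x ∈ I, DifferentiableAt ℝ (deriv y) x)
    (hF : ∀ x ∈ I, HasDerivAt F (F' (y x)) (y x)) (hy0 : ∀ x ∈ I, deriv y x ≠ 0)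
    (heq : ∀ x ∈ I, deriv y x ^ 2 = F (y x)) :
    ∀ x ∈ I, 2 * deriv (deriv y) x = F' (y x) := by
  intro x hx
  have hsq : HasDerivAt (fun t => deriv y t ^ 2) (↑2 * deriv y x ^ (2 - 1) * deriv (deriv y) x) x :=
    (hy' x hx).hasDerivAt.pow 2
  have hcomp : HasDerivAt (fun t => F (y t)) (F' (y x) * deriv y x) x :=
    (hF x hx).comp x (hy x hx).hasDerivAt
  have hev : (fun t => deriv y t ^ 2) =ᶠ[𝓝 x] fun t => F (y t) := by
    filter_upwards [hI.mem_nhds hx] with t ht using heq t ht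
  have h := hsq.unique (hcomp.congr_of_eventuallyEq hev)
  apply mul_right_cancel₀ (hy0 x hx)
  linear_combination h

theorem schwarzian_eq_of_sq_deriv_eq (hI : IsOpen I)
    (hy : ∀ x ∈ I, DifferentiableAt ℝ y x) (hy' : ∀ x ∈ I, DifferentiableAt ℝ (deriv y) x)
    (hF : ∀ x ∈ I, HasDerivAt F (F' (y x)) (y x)) (hy0 : ∀ x ∈ I, deriv y x ≠ 0)
    (heq : ∀ x ∈ I, deriv y x ^ 2 = F (y x)) {x : ℝ} (hx : x ∈ I) {c : ℝ}
    (hF' : HasDerivAt F' c (y x)) :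
    schwarzian y x = c / 2 - 3 * F' (y x) ^ 2 / (8 * F (y x)) := by
  have hdd := two_mul_deriv_deriv_eq_of_sq_deriv_eq hI hy hy' hF hy0 heq
  have hev : (fun t => deriv (deriv y) t / deriv y t) =ᶠ[𝓝 x]
      fun t => F' (y t) / (2 * deriv y t) := by
    filter_upwards [hI.mem_nhds hx] with t ht
    rw [← hdd t ht]
    field_simp [hy0 t ht]
  have hU := hy0 x hx
  have hquot : HasDerivAt (fun t => F' (y t) / (2 * deriv y t))
      ((c * deriv y x * (2 * deriv y x) - F' (y x) * (2 * deriv (deriv y) x))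
        / (2 * deriv y x) ^ 2) x :=
    (hF'.comp x (hy x hx).hasDerivAt).div ((hy' x hx).hasDerivAt.const_mul 2)
      (mul_ne_zero two_ne_zero hU)
  rw [schwarzian, (hquot.congr_of_eventuallyEq hev).deriv, ← heq x hx, ← hdd x hx]
  field_simp
  ring

end SqDerivEq

theorem schwarzian_eq_of_sq_deriv_eq_sq_div {y p R : ℝ → ℝ} {I : Set ℝ} (hI : IsOpen I)
    (hy : ∀ x ∈ I, DifferentiableAt ℝ y x) (hy' : ∀ x ∈ I, DifferentiableAt ℝ (deriv y) x)
    (hp : ContDiff ℝ 2 p) (hR : ContDiff ℝ 2 R) (hy0 : ∀ x ∈ I, deriv y x ≠ 0)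
    (heq : ∀ x ∈ I, deriv y x ^ 2 = 4 * p (y x) ^ 2 / R (y x)) {x : ℝ} (hx : x ∈ I) :
    schwarzian y x = -2 * (p (y x) ^ 2 / R (y x) ^ 2) *
      (deriv (deriv R) (y x) + (deriv p (y x) * deriv R (y x)
          - 2 * R (y x) * deriv (deriv p) (y x)) / p (y x)
        + R (y x) * deriv p (y x) ^ 2 / p (y x) ^ 2
        - 5 / 4 * deriv R (y x) ^ 2 / R (y x)) := by
  have hne : ∀ t ∈ I, p (y t) ≠ 0 ∧ R (y t) ≠ 0 := by
    intro t ht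
    have h := pow_ne_zero 2 (hy0 t ht)
    rw [heq t ht, div_ne_zero_iff] at h
    exact ⟨by simpa using h.1, h.2⟩
  have hp2 : ContDiff ℝ (1 + 1) p := hp
  have hR2 : ContDiff ℝ (1 + 1) R := hR
  have dp (t : ℝ) : HasDerivAt p (deriv p t) t := (hp.differentiable (by norm_num) t).hasDerivAt
  have dR (t : ℝ) : HasDerivAt R (deriv R t) t := (hR.differentiable (by norm_num) t).hasDerivAt
  have ddp (t : ℝ) : HasDerivAt (deriv p) (deriv (deriv p) t) t :=
    (hp2.deriv'.differentiable one_ne_zero t).hasDerivAt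
  have ddR (t : ℝ) : HasDerivAt (deriv R) (deriv (deriv R) t) t :=
    (hR2.deriv'.differentiable one_ne_zero t).hasDerivAt
  have hF : ∀ t ∈ I, HasDerivAt (fun s => 4 * p s ^ 2 / R s)
      ((8 * p (y t) * deriv p (y t) * R (y t) - 4 * p (y t) ^ 2 * deriv R (y t))
        / R (y t) ^ 2) (y t) := by
    intro t ht
    refine ((((dp _).pow 2).const_mul 4).div (dR _) (hne t ht).2).congr_deriv ?_
    simp only [Pi.pow_apply]
    ring
  have hF' := (((((dp _).const_mul 8).mul (ddp _)).mul (dR _)).sub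
    ((((dp _).pow 2).const_mul 4).mul (ddR _))).div ((dR (y x)).pow 2) (pow_ne_zero 2 (hne x hx).2)
  rw [schwarzian_eq_of_sq_deriv_eq (F := fun s => 4 * p s ^ 2 / R s)
    (F' := fun s => (8 * p s * deriv p s * R s - 4 * p s ^ 2 * deriv R s) / R s ^ 2)
    hI hy hy' hF hy0 heq hx hF']
  obtain ⟨hpx, hRx⟩ := hne x hx
  simp only [Pi.sub_apply, Pi.mul_apply, Pi.pow_apply]
  field_simp
  ring

theorem deriv_mul_sub_one_mul_sub (a : ℝ) :
    deriv (fun t : ℝ => t * (t - 1) * (t - a)) = gheunG a := by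
  funext t
  refine ((((hasDerivAt_id t).mul ((hasDerivAt_id t).sub_const 1)).mul
    ((hasDerivAt_id t).sub_const a)).congr_deriv ?_).deriv
  simp only [gheunG, Pi.mul_apply, id]
  ring

theorem stmt_19_general (a : ℝ)
    (η₁ η₂ η₃ η₄ η₅ η₆ η₇ ξ₁ ξ₂ ξ₃ ξ₄ ξ₅ ξ₆ ξ₇ : ℝ)
    (y : ℝ → ℝ) (I : Set ℝ) (hI : IsOpen I)
    (hy : ∀ x ∈ I, DifferentiableAt ℝ y x)
    (hy' : ∀ x ∈ I, DifferentiableAt ℝ (deriv y) x)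
    (hy0 : ∀ x ∈ I, deriv y x ≠ 0)
    (heq : ∀ x ∈ I, (deriv y x) ^ 2
      = 4 * (y x) ^ 2 * (y x - 1) ^ 2 * (y x - a) ^ 2
          / gheunR a η₁ η₂ η₃ η₄ η₅ η₆ η₇ (y x)) :
    ∀ x ∈ I,
      -(gheunS a ξ₁ ξ₂ ξ₃ ξ₄ ξ₅ ξ₆ ξ₇ (y x)) / gheunR a η₁ η₂ η₃ η₄ η₅ η₆ η₇ (y x)
          - (1 / 2) * (deriv (fun t => deriv (deriv y) t / deriv y t) x
              - (1 / 2) * (deriv (deriv y) x / deriv y x) ^ 2)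
        = ((y x) ^ 2 * (y x - 1) ^ 2 * (y x - a) ^ 2
              / (gheunR a η₁ η₂ η₃ η₄ η₅ η₆ η₇ (y x)) ^ 2) *
            (deriv (deriv (gheunR a η₁ η₂ η₃ η₄ η₅ η₆ η₇)) (y x)
              + (gheunG a (y x) * deriv (gheunR a η₁ η₂ η₃ η₄ η₅ η₆ η₇) (y x)
                  - 2 * gheunR a η₁ η₂ η₃ η₄ η₅ η₆ η₇ (y x) * deriv (gheunG a) (y x))
                / (y x * (y x - 1) * (y x - a))
              + gheunR a η₁ η₂ η₃ η₄ η₅ η₆ η₇ (y x) * (gheunG a (y x)) ^ 2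
                / ((y x) ^ 2 * (y x - 1) ^ 2 * (y x - a) ^ 2)
              - (5 / 4) * (deriv (gheunR a η₁ η₂ η₃ η₄ η₅ η₆ η₇) (y x)) ^ 2
                / gheunR a η₁ η₂ η₃ η₄ η₅ η₆ η₇ (y x))
          - gheunS a ξ₁ ξ₂ ξ₃ ξ₄ ξ₅ ξ₆ ξ₇ (y x) / gheunR a η₁ η₂ η₃ η₄ η₅ η₆ η₇ (y x) := by
  intro x hx
  have hR : ContDiff ℝ 2 (gheunR a η₁ η₂ η₃ η₄ η₅ η₆ η₇) := by unfold gheunR; fun_prop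
  have key := schwarzian_eq_of_sq_deriv_eq_sq_div (p := fun t => t * (t - 1) * (t - a))
    hI hy hy' (by fun_prop) hR hy0 (fun t ht => by rw [heq t ht]; ring) hx
  rw [deriv_mul_sub_one_mul_sub] at key
  rw [← schwarzian, key]
  ring

/-- closed form of the potential `V_GH` of the generalized Heun class. -/
theorem stmt_19 (a : ℝ) (ha0 : a ≠ 0) (ha1 : a ≠ 1)
    (η₁ η₂ η₃ η₄ η₅ η₆ η₇ ξ₁ ξ₂ ξ₃ ξ₄ ξ₅ ξ₆ ξ₇ : ℝ)
    (y : ℝ → ℝ) (I : Set ℝ) (hI : IsOpen I)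
    (hy : ∀ x ∈ I, DifferentiableAt ℝ y x)
    (hy' : ∀ x ∈ I, DifferentiableAt ℝ (deriv y) x)
    (hy'' : ∀ x ∈ I, DifferentiableAt ℝ (deriv (deriv y)) x)
    (hy0 : ∀ x ∈ I, deriv y x ≠ 0)
    (hy01a : ∀ x ∈ I, y x ≠ 0 ∧ y x ≠ 1 ∧ y x ≠ a)
    (hR : ∀ x ∈ I, gheunR a η₁ η₂ η₃ η₄ η₅ η₆ η₇ (y x) ≠ 0)
    (heq : ∀ x ∈ I, (deriv y x) ^ 2
      = 4 * (y x) ^ 2 * (y x - 1) ^ 2 * (y x - a) ^ 2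
          / gheunR a η₁ η₂ η₃ η₄ η₅ η₆ η₇ (y x)) :
    ∀ x ∈ I,
      -(gheunS a ξ₁ ξ₂ ξ₃ ξ₄ ξ₅ ξ₆ ξ₇ (y x)) / gheunR a η₁ η₂ η₃ η₄ η₅ η₆ η₇ (y x)
          - (1 / 2) * (deriv (fun t => deriv (deriv y) t / deriv y t) x
              - (1 / 2) * (deriv (deriv y) x / deriv y x) ^ 2)
        = ((y x) ^ 2 * (y x - 1) ^ 2 * (y x - a) ^ 2
              / (gheunR a η₁ η₂ η₃ η₄ η₅ η₆ η₇ (y x)) ^ 2) *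
            (deriv (deriv (gheunR a η₁ η₂ η₃ η₄ η₅ η₆ η₇)) (y x)
              + (gheunG a (y x) * deriv (gheunR a η₁ η₂ η₃ η₄ η₅ η₆ η₇) (y x)
                  - 2 * gheunR a η₁ η₂ η₃ η₄ η₅ η₆ η₇ (y x) * deriv (gheunG a) (y x))
                / (y x * (y x - 1) * (y x - a))
              + gheunR a η₁ η₂ η₃ η₄ η₅ η₆ η₇ (y x) * (gheunG a (y x)) ^ 2
                / ((y x) ^ 2 * (y x - 1) ^ 2 * (y x - a) ^ 2)
              - (5 / 4) * (deriv (gheunR a η₁ η₂ η₃ η₄ η₅ η₆ η₇) (y x)) ^ 2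
                / gheunR a η₁ η₂ η₃ η₄ η₅ η₆ η₇ (y x))
          - gheunS a ξ₁ ξ₂ ξ₃ ξ₄ ξ₅ ξ₆ ξ₇ (y x) / gheunR a η₁ η₂ η₃ η₄ η₅ η₆ η₇ (y x) :=
  stmt_19_general a η₁ η₂ η₃ η₄ η₅ η₆ η₇ ξ₁ ξ₂ ξ₃ ξ₄ ξ₅ ξ₆ ξ₇ y I hI hy hy' hy0 heq
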